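/- arXiv:1903.07108 — 3 statements merged into one kernel-verified Lean document; each statement's English description precedes it below -/
import Mathlib

section
/- For every pair of real numbers a and b and every real p ≥ 2, one has (a - b)(|a|^(p-2) a - |b|^(p-2) b) ≥ C (|a|^(p/2) - |b|^(p/2))^2, where C is a positive constant depending only on p (one may take C = 4(p-1)/p^2, but any explicit positive constant works). -/
/-!
Write `x = |a|`, `y = |b|` and `q = p / 2 ≥ 1`. Since `a b ≤ |a| |b|`, replacing `a, b` by their
absolute values can only decrease `(a - b)(|a|^(p-2) a - |b|^(p-2) b)`, so it suffices to show
`(x^q - y^q)^2 ≤ q (x - y)(x^(2q-1) - y^(2q-1))` for `0 ≤ y ≤ x`. This follows by multiplying the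
tangent-line bound `x^q - y^q ≤ q x^(q-1) (x - y)` for the convex function `t ↦ t^q` by
`x^q - y^q`, and then using `y^(q-1) ≤ x^(q-1)`. This gives the constant `C = 2 / p`.
-/

open Real

lemma abs_sub_abs_mul_le_sub_mul {u v : ℝ} (hu : 0 ≤ u) (hv : 0 ≤ v) (a b : ℝ) :
    (|a| - |b|) * (u * |a| - v * |b|) ≤ (a - b) * (u * a - v * b) := by
  have hab : a * b ≤ |a| * |b| := by rw [← abs_mul]; exact le_abs_self _
  nlinarith [sq_abs a, sq_abs b, mul_le_mul_of_nonneg_left hab (add_nonneg hu hv)]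

namespace Real

variable {q x y : ℝ}

lemma rpow_sub_rpow_le_mul_sub (hq : 1 ≤ q) (hy : 0 ≤ y) (hyx : y ≤ x) :
    x ^ q - y ^ q ≤ q * x ^ (q - 1) * (x - y) := by
  obtain rfl | hx := (hy.trans hyx).eq_or_lt
  · obtain rfl : y = 0 := le_antisymm hyx hy
    simp
  have hxq : 0 < x ^ q := rpow_pos_of_pos hx q
  -- Bernoulli's inequality at `y / x` is the tangent-line bound at `x`, scaled by `x^q`.
  have bernoulli := one_add_mul_self_le_rpow_one_add
    (by linarith [div_nonneg hy hx.le] : -1 ≤ y / x - 1) hq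
  rw [add_sub_cancel, div_rpow hy hx.le, le_div_iff₀ hxq] at bernoulli
  have htangent : q * x ^ (q - 1) * (x - y) = -(q * (y / x - 1)) * x ^ q := by
    rw [rpow_sub_one hx.ne']
    field_simp
    ring
  linarith

lemma rpow_sub_one_mul_rpow_sub_rpow_le (hq : 1 ≤ q) (hy : 0 ≤ y) (hyx : y ≤ x) :
    x ^ (q - 1) * (x ^ q - y ^ q) ≤ x ^ (2 * q - 1) - y ^ (2 * q - 1) := by
  have hsplit : ∀ t : ℝ, 0 ≤ t → t ^ (2 * q - 1) = t ^ (q - 1) * t ^ q := fun t ht => by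
    rw [← rpow_add' ht (by linarith)]
    ring_nf
  have hmono : y ^ (q - 1) * y ^ q ≤ x ^ (q - 1) * y ^ q :=
    mul_le_mul_of_nonneg_right (rpow_le_rpow hy hyx (by linarith)) (rpow_nonneg hy q)
  rw [hsplit x (hy.trans hyx), hsplit y hy]
  linarith

lemma sq_rpow_sub_rpow_le_of_le (hq : 1 ≤ q) (hy : 0 ≤ y) (hyx : y ≤ x) :
    (x ^ q - y ^ q) ^ 2 ≤ q * ((x - y) * (x ^ (2 * q - 1) - y ^ (2 * q - 1))) := by
  have hdiff : 0 ≤ x ^ q - y ^ q := sub_nonneg.2 (rpow_le_rpow hy hyx (by linarith))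
  calc (x ^ q - y ^ q) ^ 2 = (x ^ q - y ^ q) * (x ^ q - y ^ q) := sq _
    _ ≤ (q * x ^ (q - 1) * (x - y)) * (x ^ q - y ^ q) :=
      mul_le_mul_of_nonneg_right (rpow_sub_rpow_le_mul_sub hq hy hyx) hdiff
    _ = q * (x - y) * (x ^ (q - 1) * (x ^ q - y ^ q)) := by ring
    _ ≤ q * (x - y) * (x ^ (2 * q - 1) - y ^ (2 * q - 1)) :=
      mul_le_mul_of_nonneg_left (rpow_sub_one_mul_rpow_sub_rpow_le hq hy hyx)
        (mul_nonneg (by linarith) (sub_nonneg.2 hyx))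
    _ = q * ((x - y) * (x ^ (2 * q - 1) - y ^ (2 * q - 1))) := by ring

lemma sq_rpow_sub_rpow_le (hq : 1 ≤ q) (hx : 0 ≤ x) (hy : 0 ≤ y) :
    (x ^ q - y ^ q) ^ 2 ≤ q * ((x - y) * (x ^ (2 * q - 1) - y ^ (2 * q - 1))) := by
  rcases le_total y x with hyx | hxy
  · exact sq_rpow_sub_rpow_le_of_le hq hy hyx
  · convert sq_rpow_sub_rpow_le_of_le hq hx hxy using 1 <;> ring

end Real

/-- For every `p ≥ 2` there is a positive constant `C` (depending only on `p`) such that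
for all reals `a, b`: `(a - b)(|a|^(p-2) a - |b|^(p-2) b) ≥ C (|a|^(p/2) - |b|^(p/2))²`. -/
theorem stmt_0 (p : ℝ) (hp : 2 ≤ p) :
    ∃ C : ℝ, 0 < C ∧ ∀ a b : ℝ,
      C * (|a| ^ (p / 2) - |b| ^ (p / 2)) ^ 2
        ≤ (a - b) * (|a| ^ (p - 2) * a - |b| ^ (p - 2) * b) := by
  refine ⟨2 / p, by positivity, fun a b => ?_⟩
  have hpow : ∀ x : ℝ, 0 ≤ x → x ^ (p - 2) * x = x ^ (2 * (p / 2) - 1) := fun x hx => by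
    rw [← rpow_add_one' hx (by linarith)]
    ring_nf
  have key := sq_rpow_sub_rpow_le (q := p / 2) (by linarith) (abs_nonneg a) (abs_nonneg b)
  rw [← hpow _ (abs_nonneg a), ← hpow _ (abs_nonneg b)] at key
  calc 2 / p * (|a| ^ (p / 2) - |b| ^ (p / 2)) ^ 2
      ≤ (|a| - |b|) * (|a| ^ (p - 2) * |a| - |b| ^ (p - 2) * |b|) := by
        rw [div_mul_eq_mul_div, div_le_iff₀ (by linarith)]
        linarith
    _ ≤ (a - b) * (|a| ^ (p - 2) * a - |b| ^ (p - 2) * b) :=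
      abs_sub_abs_mul_le_sub_mul (rpow_nonneg (abs_nonneg a) _) (rpow_nonneg (abs_nonneg b) _) a b
end

section
/- Let Ω_ℓ ⊆ ℝ^N be a convex open set and let u : ℝ^N → ℝ be continuously differentiable on Ω_ℓ with gradient in L²(Ω_ℓ). Let J : ℝ^N → ℝ be nonnegative and measurable with finite second moment M₂(J) = ∫ J(z)|z|² dz. Then ∫_{Ω_ℓ} ∫_{Ω_ℓ} J(x-y)(u(y)-u(x))² dy dx ≤ M₂(J) ∫_{Ω_ℓ} |∇u|². -/
open MeasureTheory Real Set
open scoped ENNReal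

/-!
On the segment from `x` to `y`, the fundamental theorem of calculus and Jensen's inequality give
`(u y - u x)² ≤ ‖y - x‖² ∫₀¹ ‖Du (x + s • (y - x))‖² ds`. Multiplying by `J (x - y)`, integrating,
and substituting `z = x - y`, each `s ∈ (0, 1]` contributes at most `M₂(J) ∫_Ω ‖Du‖²`: for
`x, x - z ∈ Ω` the point `x - s • z` lies in `Ω` by convexity, and Lebesgue measure is translation
invariant. The argument runs in `ℝ≥0∞`, where Tonelli needs no integrability; the Bochner side
enters only through `ofReal (∫ f) ≤ ∫⁻ ofReal f`, which holds for every `f` (a non-integrable `f`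
has integral `0`), so nothing about `u` off `Ω` is ever needed.
-/

theorem ofReal_integral_le_lintegral_ofReal {α : Type*} [MeasurableSpace α] {μ : Measure α}
    (f : α → ℝ) : ENNReal.ofReal (∫ x, f x ∂μ) ≤ ∫⁻ x, ENNReal.ofReal (f x) ∂μ := by
  by_cases hf : Integrable f μ
  · refine le_trans (ENNReal.ofReal_le_ofReal ?_) ENNReal.ofReal_toReal_le
    rw [integral_eq_lintegral_pos_part_sub_lintegral_neg_part hf]
    exact sub_le_self _ ENNReal.toReal_nonneg
  · simp [integral_undef hf]

theorem sq_integral_le_integral_sq {α : Type*} [MeasurableSpace α] {μ : Measure α}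
    [IsProbabilityMeasure μ] {f : α → ℝ} (hf : Integrable f μ)
    (hf2 : Integrable (fun a => f a ^ 2) μ) : (∫ a, f a ∂μ) ^ 2 ≤ ∫ a, f a ^ 2 ∂μ :=
  (even_two.convexOn_pow (𝕜 := ℝ)).map_integral_le (continuous_pow 2).continuousOn isClosed_univ
    (ae_of_all _ fun _ => mem_univ _) hf hf2

theorem norm_gradient {E : Type*} [NormedAddCommGroup E] [InnerProductSpace ℝ E] [CompleteSpace E]
    (u : E → ℝ) (x : E) : ‖gradient u x‖ = ‖fderiv ℝ u x‖ :=
  (InnerProductSpace.toDual ℝ E).symm.norm_map _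

theorem sq_sub_le_sq_norm_mul_integral_sq_norm_fderiv {E : Type*} [NormedAddCommGroup E]
    [NormedSpace ℝ E] {Ω : Set E} (hΩc : Convex ℝ Ω) (hΩo : IsOpen Ω) {u : E → ℝ}
    (hu : ContDiffOn ℝ 1 u Ω) {x y : E} (hx : x ∈ Ω) (hy : y ∈ Ω) :
    (u y - u x) ^ 2 ≤ ‖y - x‖ ^ 2 * ∫ s in Ioc (0 : ℝ) 1, ‖fderiv ℝ u (x + s • (y - x))‖ ^ 2 := by
  set v := y - x
  set c : ℝ → E := fun s => x + s • v
  have hcΩ : ∀ s ∈ Icc (0 : ℝ) 1, c s ∈ Ω := fun s hs => hΩc.add_smul_sub_mem hx hy hs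
  have hDu : ContinuousOn (fun s => fderiv ℝ u (c s)) (Icc 0 1) :=
    (hu.continuousOn_fderiv_of_isOpen hΩo le_rfl).comp (by fun_prop) hcΩ
  have hderiv : ∀ s ∈ uIcc (0 : ℝ) 1, HasDerivAt (fun t => u (c t)) (fderiv ℝ u (c s) v) s := by
    intro s hs
    rw [uIcc_of_le zero_le_one] at hs
    have hdiff := (hu.contDiffAt (hΩo.mem_nhds (hcΩ s hs))).differentiableAt one_ne_zero
    have hc' : HasDerivAt c v s := by
      simpa [c] using ((hasDerivAt_id s).smul_const v).const_add x
    exact hdiff.hasFDerivAt.comp_hasDerivAt s hc'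
  have hint : ∀ g : ℝ → ℝ, ContinuousOn g (Icc 0 1) → IntegrableOn g (Ioc 0 1) := fun g hg =>
    hg.integrableOn_Icc.mono_set Ioc_subset_Icc_self
  have hftc : ∫ s in Ioc (0 : ℝ) 1, fderiv ℝ u (c s) v = u y - u x := by
    rw [← intervalIntegral.integral_of_le zero_le_one,
      intervalIntegral.integral_eq_sub_of_hasDerivAt hderiv
        ((hDu.clm_apply continuousOn_const).intervalIntegrable_of_Icc zero_le_one)]
    simp [c, v]
  have : IsProbabilityMeasure (volume.restrict (Ioc (0 : ℝ) 1)) := ⟨by simp⟩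
  calc (u y - u x) ^ 2 = (∫ s in Ioc (0 : ℝ) 1, fderiv ℝ u (c s) v) ^ 2 := by rw [hftc]
    _ ≤ ∫ s in Ioc (0 : ℝ) 1, (fderiv ℝ u (c s) v) ^ 2 :=
      sq_integral_le_integral_sq (hint _ (hDu.clm_apply continuousOn_const))
        (hint _ ((hDu.clm_apply continuousOn_const).pow 2))
    _ ≤ ∫ s in Ioc (0 : ℝ) 1, ‖v‖ ^ 2 * ‖fderiv ℝ u (c s)‖ ^ 2 := by
      refine integral_mono (hint _ ((hDu.clm_apply continuousOn_const).pow 2))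
        ((hint _ (hDu.norm.pow 2)).const_mul _) fun s => ?_
      rw [← sq_abs, ← mul_pow, mul_comm]
      exact pow_le_pow_left₀ (abs_nonneg _) ((fderiv ℝ u (c s)).le_opNorm v) 2
    _ = ‖v‖ ^ 2 * ∫ s in Ioc (0 : ℝ) 1, ‖fderiv ℝ u (c s)‖ ^ 2 := integral_const_mul _ _

theorem ofReal_mul_sq_sub_le_mul_lintegral_segment {E : Type*} [NormedAddCommGroup E]
    [NormedSpace ℝ E] {Ω : Set E} (hΩc : Convex ℝ Ω) (hΩo : IsOpen Ω) {u : E → ℝ}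
    (hu : ContDiffOn ℝ 1 u Ω) {j : ℝ} (hj : 0 ≤ j) {x y : E} (hx : x ∈ Ω) (hy : y ∈ Ω) :
    ENNReal.ofReal (j * (u y - u x) ^ 2) ≤ ENNReal.ofReal (j * ‖x - y‖ ^ 2) *
      ∫⁻ s in Ioc (0 : ℝ) 1, ENNReal.ofReal (‖fderiv ℝ u (x + s • (y - x))‖ ^ 2) :=
  calc ENNReal.ofReal (j * (u y - u x) ^ 2)
      ≤ ENNReal.ofReal (j * (‖y - x‖ ^ 2 *
          ∫ s in Ioc (0 : ℝ) 1, ‖fderiv ℝ u (x + s • (y - x))‖ ^ 2)) :=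
        ENNReal.ofReal_le_ofReal <| mul_le_mul_of_nonneg_left
          (sq_sub_le_sq_norm_mul_integral_sq_norm_fderiv hΩc hΩo hu hx hy) hj
    _ ≤ ENNReal.ofReal (j * ‖x - y‖ ^ 2) *
        ∫⁻ s in Ioc (0 : ℝ) 1, ENNReal.ofReal (‖fderiv ℝ u (x + s • (y - x))‖ ^ 2) := by
        rw [← mul_assoc, ENNReal.ofReal_mul (by positivity), norm_sub_rev]
        exact mul_le_mul_right (ofReal_integral_le_lintegral_ofReal _) _

section Kernel

variable {E : Type*} [NormedAddCommGroup E] [NormedSpace ℝ E] [FiniteDimensional ℝ E]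
  [MeasurableSpace E] [BorelSpace E] {μ : Measure E} [μ.IsAddHaarMeasure] {K F : E → ℝ≥0∞}

theorem lintegral_lintegral_mul_add_smul_sub (hK : Measurable K) (hF : Measurable F) (s : ℝ) :
    ∫⁻ x, ∫⁻ y, K (x - y) * F (x + s • (y - x)) ∂μ ∂μ = (∫⁻ z, K z ∂μ) * ∫⁻ x, F x ∂μ := by
  calc ∫⁻ x, ∫⁻ y, K (x - y) * F (x + s • (y - x)) ∂μ ∂μ
      = ∫⁻ x, ∫⁻ z, K z * F (x - s • z) ∂μ ∂μ := by
        refine lintegral_congr fun x => ?_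
        rw [← lintegral_sub_left_eq_self _ x]
        congr with z
        rw [sub_sub_cancel, sub_sub_cancel_left, smul_neg, ← sub_eq_add_neg]
    _ = ∫⁻ z, ∫⁻ x, K z * F (x - s • z) ∂μ ∂μ := lintegral_lintegral_swap (by fun_prop)
    _ = ∫⁻ z, K z * ∫⁻ x, F x ∂μ ∂μ := by
        refine lintegral_congr fun z => ?_
        rw [lintegral_const_mul _ (by fun_prop), lintegral_sub_right_eq_self F]
    _ = (∫⁻ z, K z ∂μ) * ∫⁻ x, F x ∂μ := lintegral_mul_const _ hK

theorem setLIntegral_setLIntegral_mul_add_smul_sub_le {Ω : Set E} (hΩc : Convex ℝ Ω)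
    (hΩm : MeasurableSet Ω) (hK : Measurable K) (hF : Measurable F) {s : ℝ} (hs : s ∈ Icc 0 1) :
    ∫⁻ x in Ω, ∫⁻ y in Ω, K (x - y) * F (x + s • (y - x)) ∂μ ∂μ
      ≤ (∫⁻ z, K z ∂μ) * ∫⁻ x in Ω, F x ∂μ := by
  calc ∫⁻ x in Ω, ∫⁻ y in Ω, K (x - y) * F (x + s • (y - x)) ∂μ ∂μ
      = ∫⁻ x in Ω, ∫⁻ y in Ω, K (x - y) * Ω.indicator F (x + s • (y - x)) ∂μ ∂μ :=
        setLIntegral_congr_fun hΩm fun x hx => setLIntegral_congr_fun hΩm fun y hy => by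
          rw [indicator_of_mem (hΩc.add_smul_sub_mem hx hy hs)]
    _ ≤ ∫⁻ x, ∫⁻ y, K (x - y) * Ω.indicator F (x + s • (y - x)) ∂μ ∂μ :=
        lintegral_mono' Measure.restrict_le_self fun x =>
          lintegral_mono' Measure.restrict_le_self le_rfl
    _ = (∫⁻ z, K z ∂μ) * ∫⁻ x in Ω, F x ∂μ := by
        rw [lintegral_lintegral_mul_add_smul_sub hK (hF.indicator hΩm), lintegral_indicator hΩm]

theorem setLIntegral_setLIntegral_mul_lintegral_segment_le {Ω : Set E} (hΩc : Convex ℝ Ω)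
    (hΩm : MeasurableSet Ω) (hK : Measurable K) (hF : Measurable F) :
    ∫⁻ x in Ω, ∫⁻ y in Ω, K (x - y) * (∫⁻ s in Ioc (0 : ℝ) 1, F (x + s • (y - x))) ∂μ ∂μ
      ≤ (∫⁻ z, K z ∂μ) * ∫⁻ x in Ω, F x ∂μ := by
  calc ∫⁻ x in Ω, ∫⁻ y in Ω, K (x - y) * (∫⁻ s in Ioc (0 : ℝ) 1, F (x + s • (y - x))) ∂μ ∂μ
      = ∫⁻ x in Ω, (∫⁻ s in Ioc (0 : ℝ) 1, ∫⁻ y in Ω, K (x - y) * F (x + s • (y - x)) ∂μ) ∂μ := by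
        refine lintegral_congr fun x => ?_
        rw [← lintegral_lintegral_swap (by fun_prop)]
        exact lintegral_congr fun y => (lintegral_const_mul _ (by fun_prop)).symm
    _ = ∫⁻ s in Ioc (0 : ℝ) 1, ∫⁻ x in Ω, ∫⁻ y in Ω, K (x - y) * F (x + s • (y - x)) ∂μ ∂μ :=
        lintegral_lintegral_swap (Measurable.lintegral_prod_right'
          (f := fun q : (E × ℝ) × E => K (q.1.1 - q.2) * F (q.1.1 + q.1.2 • (q.2 - q.1.1)))
          (by fun_prop)).aemeasurable
    _ ≤ ∫⁻ _ in Ioc (0 : ℝ) 1, (∫⁻ z, K z ∂μ) * ∫⁻ x in Ω, F x ∂μ :=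
        setLIntegral_mono' measurableSet_Ioc fun s hs =>
          setLIntegral_setLIntegral_mul_add_smul_sub_le hΩc hΩm hK hF (Ioc_subset_Icc_self hs)
    _ = (∫⁻ z, K z ∂μ) * ∫⁻ x in Ω, F x ∂μ := by simp

end Kernel

/-- If `Ωℓ ⊆ ℝ^N` is convex and open, `u` is `C¹` on `Ωℓ` with gradient in `L²(Ωℓ)`,
and `J ≥ 0` is measurable with finite second moment `M₂(J) = ∫ J(z)‖z‖²`, then
`∫_{Ωℓ}∫_{Ωℓ} J(x-y)(u(y)-u(x))² dy dx ≤ M₂(J) ∫_{Ωℓ} ‖∇u‖²`. -/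
theorem stmt_1 (N : ℕ) (Ωl : Set (EuclideanSpace ℝ (Fin N)))
    (hconv : Convex ℝ Ωl) (hopen : IsOpen Ωl)
    (u : EuclideanSpace ℝ (Fin N) → ℝ) (hu : ContDiffOn ℝ 1 u Ωl)
    (hgrad : IntegrableOn (fun x => ‖gradient u x‖ ^ 2) Ωl)
    (J : EuclideanSpace ℝ (Fin N) → ℝ) (hJ0 : ∀ z, 0 ≤ J z) (hJm : Measurable J)
    (hM2 : Integrable (fun z => J z * ‖z‖ ^ 2)) :
    ∫ x in Ωl, ∫ y in Ωl, J (x - y) * (u y - u x) ^ 2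
      ≤ (∫ z, J z * ‖z‖ ^ 2) * ∫ x in Ωl, ‖gradient u x‖ ^ 2 := by
  simp_rw [norm_gradient] at hgrad ⊢
  set K := fun z => ENNReal.ofReal (J z * ‖z‖ ^ 2)
  set G := fun p => ENNReal.ofReal (‖fderiv ℝ u p‖ ^ 2)
  have hK : Measurable K := by fun_prop
  have hG : Measurable G := by fun_prop
  have hK_nonneg : ∀ z, 0 ≤ J z * ‖z‖ ^ 2 := fun z => mul_nonneg (hJ0 z) (sq_nonneg _)
  have hM2_nonneg : 0 ≤ ∫ z, J z * ‖z‖ ^ 2 := integral_nonneg hK_nonneg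
  have hgrad_nonneg : 0 ≤ ∫ x in Ωl, ‖fderiv ℝ u x‖ ^ 2 := integral_nonneg fun _ => by positivity
  rw [← ENNReal.ofReal_le_ofReal_iff (mul_nonneg hM2_nonneg hgrad_nonneg)]
  calc ENNReal.ofReal (∫ x in Ωl, ∫ y in Ωl, J (x - y) * (u y - u x) ^ 2)
      ≤ ∫⁻ x in Ωl, ∫⁻ y in Ωl, ENNReal.ofReal (J (x - y) * (u y - u x) ^ 2) :=
        (ofReal_integral_le_lintegral_ofReal _).trans
          (lintegral_mono fun _ => ofReal_integral_le_lintegral_ofReal _)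
    _ ≤ ∫⁻ x in Ωl, ∫⁻ y in Ωl, K (x - y) * ∫⁻ s in Ioc (0 : ℝ) 1, G (x + s • (y - x)) :=
        setLIntegral_mono' hopen.measurableSet fun x hx =>
          setLIntegral_mono' hopen.measurableSet fun y hy =>
            ofReal_mul_sq_sub_le_mul_lintegral_segment hconv hopen hu (hJ0 _) hx hy
    _ ≤ (∫⁻ z, K z) * ∫⁻ x in Ωl, G x :=
        setLIntegral_setLIntegral_mul_lintegral_segment_le hconv hopen.measurableSet hK hG
    _ = ENNReal.ofReal ((∫ z, J z * ‖z‖ ^ 2) * ∫ x in Ωl, ‖fderiv ℝ u x‖ ^ 2) := by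
        rw [ENNReal.ofReal_mul hM2_nonneg,
          ofReal_integral_eq_lintegral_ofReal hM2 (ae_of_all _ hK_nonneg),
          ofReal_integral_eq_lintegral_ofReal hgrad (ae_of_all _ fun x => by positivity)]
end

section
/- Let u : [0,∞) → ℝ≥0 be a C¹ function satisfying u'(t) ≤ -C min{ M^{-pγ} u(t)^{1+γ}, u(t) } for all t ≥ 0, where C, M > 0, γ = 2/(N(p-1)) > 0 and p ≥ 2. Then there is a constant C' > 0 (depending on C, M, γ, u(0)) such that u(t) ≤ C' t^{-1/γ} for all t > 0. -/
open Real

/-- ODE (Gronwall-type) lemma for polynomial decay: if `u ≥ 0` is `C¹` on `[0,∞)` with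
`u'(t) ≤ -C min{M^{-pγ} u(t)^{1+γ}, u(t)}`, `C, M > 0`, `γ = 2/(N(p-1))`, `p ≥ 2`,
then `u(t) ≤ C' t^{-1/γ}` for all `t > 0` and some `C' > 0`. -/
theorem stmt_8 (N : ℕ) (hN : 0 < N) (p : ℝ) (hp : 2 ≤ p)
    (γ : ℝ) (hγ : γ = 2 / (N * (p - 1)))
    (C M : ℝ) (hC : 0 < C) (hM : 0 < M)
    (u u' : ℝ → ℝ)
    (hupos : ∀ t, 0 ≤ t → 0 ≤ u t)
    (hderiv : ∀ t, 0 ≤ t → HasDerivAt u (u' t) t)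
    (hineq : ∀ t, 0 ≤ t →
      u' t ≤ -C * min (M ^ (-(p * γ)) * u t ^ (1 + γ)) (u t)) :
    ∃ C' : ℝ, 0 < C' ∧ ∀ t : ℝ, 0 < t → u t ≤ C' * t ^ (-(1 / γ)) := by
  have hN' : (0:ℝ) < N := by exact_mod_cast hN
  have hγpos : 0 < γ := by
    rw [hγ]
    have h1 : (0:ℝ) < N * (p - 1) := by nlinarith
    positivity
  have hγne : γ ≠ 0 := ne_of_gt hγpos
  set A : ℝ := M ^ (-(p * γ)) with hA
  have hApos : 0 < A := Real.rpow_pos_of_pos hM _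
  have hu'nonpos : ∀ s, 0 ≤ s → u' s ≤ 0 := by
    intro s hs
    have hmin : 0 ≤ min (A * u s ^ (1 + γ)) (u s) :=
      le_min (mul_nonneg hApos.le (Real.rpow_nonneg (hupos s hs) _)) (hupos s hs)
    have := hineq s hs
    nlinarith
  have hcont : ContinuousOn u (Set.Ici (0:ℝ)) := fun s hs =>
    ((hderiv s hs).continuousAt).continuousWithinAt
  have hanti : AntitoneOn u (Set.Ici (0:ℝ)) := by
    apply antitoneOn_of_deriv_nonpos (convex_Ici 0) hcont
    · intro s hs
      rw [interior_Ici] at hs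
      exact ((hderiv s (le_of_lt hs)).differentiableAt).differentiableWithinAt
    · intro s hs
      rw [interior_Ici] at hs
      rw [(hderiv s (le_of_lt hs)).deriv]
      exact hu'nonpos s (le_of_lt hs)
  by_cases h0 : u 0 = 0
  · refine ⟨1, one_pos, fun t ht => ?_⟩
    have h1 : u t ≤ u 0 := hanti Set.self_mem_Ici (Set.mem_Ici.mpr ht.le) ht.le
    have h2 : 0 ≤ (1:ℝ) * t ^ (-(1 / γ)) := by positivity
    rw [h0] at h1
    linarith
  · have hu0 : 0 < u 0 := lt_of_le_of_ne (hupos 0 le_rfl) (Ne.symm h0)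
    set B : ℝ := min A (u 0 ^ (-γ)) with hB
    have hBpos : 0 < B := lt_min hApos (Real.rpow_pos_of_pos hu0 _)
    set K : ℝ := γ * (C * B) with hK
    have hKpos : 0 < K := by positivity
    refine ⟨K ^ (-(1 / γ)), Real.rpow_pos_of_pos hKpos _, fun t ht => ?_⟩
    by_cases hz : ∃ s ∈ Set.Icc (0:ℝ) t, u s = 0
    · obtain ⟨s, hs, hus⟩ := hz
      have h1 : u t ≤ u s := hanti (Set.mem_Ici.mpr hs.1) (Set.mem_Ici.mpr ht.le) hs.2
      have h2 : 0 ≤ K ^ (-(1 / γ)) * t ^ (-(1 / γ)) := by positivity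
      rw [hus] at h1
      linarith
    · push_neg at hz
      have hpos : ∀ s ∈ Set.Icc (0:ℝ) t, 0 < u s := fun s hs =>
        lt_of_le_of_ne (hupos s hs.1) (Ne.symm (hz s hs))
      -- key differential inequality
      have hkey : ∀ s ∈ Set.Icc (0:ℝ) t, u' s ≤ -(C * B) * u s ^ (1 + γ) := by
        intro s hs
        have hus : 0 < u s := hpos s hs
        have hX : 0 < u s ^ (1 + γ) := Real.rpow_pos_of_pos hus _
        have hle : u s ≤ u 0 := hanti Set.self_mem_Ici (Set.mem_Ici.mpr hs.1) hs.1
        have hb2 : u 0 ^ (-γ) ≤ u s ^ (-γ) :=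
          Real.rpow_le_rpow_of_nonpos hus hle (by linarith)
        have hmin : B * u s ^ (1 + γ) ≤ min (A * u s ^ (1 + γ)) (u s) := by
          refine le_min (mul_le_mul_of_nonneg_right (min_le_left _ _) hX.le) ?_
          have h3 : B * u s ^ (1 + γ) ≤ u s ^ (-γ) * u s ^ (1 + γ) :=
            mul_le_mul_of_nonneg_right (le_trans (min_le_right _ _) hb2) hX.le
          have h4 : u s ^ (-γ) * u s ^ (1 + γ) = u s := by
            rw [← Real.rpow_add hus, show -γ + (1 + γ) = 1 by ring, Real.rpow_one]
          linarith
        have := hineq s hs.1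
        nlinarith
      -- monotonicity of u^(-γ) - K s
      set h : ℝ → ℝ := fun s => u s ^ (-γ) - K * s with hh
      have hhd : ∀ s ∈ Set.Icc (0:ℝ) t,
          HasDerivAt h (u' s * (-γ) * u s ^ (-γ - 1) - K) s := by
        intro s hs
        have h1 : HasDerivAt (fun s => u s ^ (-γ)) (u' s * (-γ) * u s ^ (-γ - 1)) s :=
          (hderiv s hs.1).rpow_const (p := -γ) (Or.inl (hpos s hs).ne')
        have h2 : HasDerivAt (fun s : ℝ => K * s) K s := by
          simpa using (hasDerivAt_id s).const_mul K
        exact h1.sub h2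
      have hmono : MonotoneOn h (Set.Icc 0 t) := by
        apply monotoneOn_of_deriv_nonneg (convex_Icc 0 t)
        · exact fun s hs => ((hhd s hs).differentiableAt).continuousAt.continuousWithinAt
        · intro s hs
          rw [interior_Icc] at hs
          exact ((hhd s ⟨hs.1.le, hs.2.le⟩).differentiableAt).differentiableWithinAt
        · intro s hs
          rw [interior_Icc] at hs
          have hs' : s ∈ Set.Icc (0:ℝ) t := ⟨hs.1.le, hs.2.le⟩
          rw [(hhd s hs').deriv]
          have hus : 0 < u s := hpos s hs'
          have hP : 0 < u s ^ (-γ - 1) := Real.rpow_pos_of_pos hus _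
          have e1 : u s ^ (1 + γ) * u s ^ (-γ - 1) = 1 := by
            rw [← Real.rpow_add hus, show 1 + γ + (-γ - 1) = 0 by ring, Real.rpow_zero]
          have h2 : u' s * u s ^ (-γ - 1) ≤ -(C * B) * u s ^ (1 + γ) * u s ^ (-γ - 1) :=
            mul_le_mul_of_nonneg_right (hkey s hs') hP.le
          have h3 : u' s * u s ^ (-γ - 1) ≤ -(C * B) := by nlinarith
          nlinarith [mul_le_mul_of_nonneg_left h3 hγpos.le]
      have hfin : K * t ≤ u t ^ (-γ) := by
        have := hmono (Set.mem_Icc.mpr ⟨le_rfl, ht.le⟩) (Set.mem_Icc.mpr ⟨ht.le, le_rfl⟩) ht.le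
        simp only [hh] at this
        have h5 : 0 < u 0 ^ (-γ) := Real.rpow_pos_of_pos hu0 _
        nlinarith
      have hut : 0 < u t := hpos t ⟨ht.le, le_rfl⟩
      have hKt : 0 < K * t := by positivity
      have h6 : (u t ^ (-γ)) ^ (-(1 / γ)) ≤ (K * t) ^ (-(1 / γ)) :=
        Real.rpow_le_rpow_of_nonpos hKt hfin (neg_nonpos.mpr (by positivity))
      have h7 : (u t ^ (-γ)) ^ (-(1 / γ)) = u t := by
        rw [← Real.rpow_mul hut.le]
        have : -γ * -(1 / γ) = 1 := by field_simp
        rw [this, Real.rpow_one]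
      have h8 : (K * t) ^ (-(1 / γ)) = K ^ (-(1 / γ)) * t ^ (-(1 / γ)) :=
        Real.mul_rpow hKpos.le ht.le
      rw [h7, h8] at h6
      exact h6
end
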